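/- arXiv:1705.05774 — 4 statements merged into one kernel-verified Lean document; each statement's English description precedes it below -/
import Mathlib

section
/- Let n ≥ 1, let Y ∈ ℂ^{n×n} be invertible, let V⁰ ∈ ℂⁿ, and let (V_*, s_*) be a base solution of the power flow equations diag(V_*)·conj(Y(V_* − V⁰)) = s_* with all entries of V_* nonzero; assume J_* is invertible with inverse blocks M_*, N_*. Let s ∈ ℂⁿ and r > 0 be arbitrary and set Δs = s − s_*. If (1/r)·‖M_*·conj(Z_*)·conj(Δs) + N_*·Z_*·Δs‖ + ‖J_*⁻¹‖·‖Z_*·diag(s)‖·r + ‖M_*·conj(Z_*)·diag(conj(Δs)) + N_*·diag(Z_*·Δs)‖ + ‖M_*·diag(conj(Z_*·Δs)) + N_*·Z_*·diag(Δs)‖ ≤ 1, then there exists V ∈ ℂⁿ with all entries nonzero solving diag(V)·conj(Y(V − V⁰)) = s. Moreover, if r < 1, this solution V satisfies |V_{*,i}|/(1+r) ≤ |V_i| ≤ |V_{*,i}|/(1−r) for every index i. -/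
open Matrix

/-- ℓ∞ norm of a complex vector: `max_i |x_i|`. -/
noncomputable def vnorm {n : ℕ} (x : Fin n → ℂ) : ℝ := ⨆ i, ‖x i‖

/-- Induced ∞-matrix norm: `max_i ∑_j |A_{ij}|`. -/
noncomputable def mnorm {n : ℕ} (A : Matrix (Fin n) (Fin n) ℂ) : ℝ :=
  ⨆ i, ∑ j, ‖A i j‖

/-- Induced ∞-matrix norm for 2n×2n block matrices. -/
noncomputable def mnorm2 {n : ℕ} (A : Matrix (Fin n ⊕ Fin n) (Fin n ⊕ Fin n) ℂ) : ℝ :=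
  ⨆ i, ∑ j, ‖A i j‖

/-- Entrywise complex conjugation of a matrix. -/
def mconj {n : ℕ} (A : Matrix (Fin n) (Fin n) ℂ) : Matrix (Fin n) (Fin n) ℂ :=
  A.map (starRingEnd ℂ)

/-!
Substituting `V = V_* / (1 + w)` componentwise, and using the base solution, turns the power flow
equations into `conj w + (1 + conj w) * Z_* (Δs + s * w) = 0`, i.e. into the real-linear system
`Z_* diag(s_*) w + conj w = R(w)` with `R` affine plus quadratic in `w`. The matrix `J_*` is that
real-linear map written on the pair `(w, conj w)`, so applying `J_*⁻¹` gives a fixed-point problem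
`w = F(w)` with `F` again affine plus quadratic. The certificate bounds the constant, linear and
quadratic parts of `F`, and makes `F` a self-map of a closed ball of radius `ρ ≤ r` that is
`1`-Lipschitz there. A nonexpansive self-map of a compact convex set has a fixed point: the
contractions `x₀ + θ (F - x₀)`, `θ < 1`, have fixed points with `‖F x - x‖ → 0`, and `‖F x - x‖`
attains its minimum. Finally `|w_i| ≤ r` gives the bounds on `|V_i|`.
-/

open Set

attribute [local instance] Matrix.linftyOpSeminormedAddCommGroup

section FixedPoint

variable {E : Type*} [NormedAddCommGroup E] [NormedSpace ℝ E] {K : Set E} {f : E → E}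

theorem Convex.exists_eq_add_smul_sub (hKc : IsComplete K) (hKcv : Convex ℝ K) (hfK : MapsTo f K K)
    (hf : LipschitzOnWith 1 f K) {x₀ : E} (hx₀ : x₀ ∈ K) {θ : ℝ} (hθ0 : 0 ≤ θ) (hθ1 : θ < 1) :
    ∃ x ∈ K, x = x₀ + θ • (f x - x₀) := by
  set g : E → E := fun x => x₀ + θ • (f x - x₀)
  have hgK : MapsTo g K K := fun x hx => hKcv.add_smul_sub_mem hx₀ (hfK hx) ⟨hθ0, hθ1.le⟩
  have hg : LipschitzOnWith θ.toNNReal g K := LipschitzOnWith.of_dist_le_mul fun x hx y hy => by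
    rw [Real.coe_toNNReal _ hθ0, dist_add_left, dist_eq_norm, ← smul_sub, sub_sub_sub_cancel_right,
      norm_smul, Real.norm_of_nonneg hθ0]
    simpa [dist_eq_norm] using mul_le_mul_of_nonneg_left (hf.dist_le_mul x hx y hy) hθ0
  obtain ⟨x, hx, hfix, -⟩ := ContractingWith.exists_fixedPoint' hKc hgK
    ⟨by simpa using hθ1, hgK.lipschitzOnWith_iff_restrict.mp hg⟩ hx₀ (edist_ne_top _ _)
  exact ⟨x, hx, hfix.symm⟩

theorem IsCompact.exists_fixedPoint_of_lipschitzOnWith_one (hKc : IsCompact K) (hKcv : Convex ℝ K)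
    (hKne : K.Nonempty) (hfK : MapsTo f K K) (hf : LipschitzOnWith 1 f K) :
    ∃ x ∈ K, f x = x := by
  obtain ⟨x₀, hx₀⟩ := hKne
  obtain ⟨C, hC⟩ := hKc.isBounded.exists_norm_le
  have hC0 : 0 ≤ C := (norm_nonneg _).trans (hC x₀ hx₀)
  have happrox : ∀ ε > 0, ∃ x ∈ K, ‖f x - x‖ ≤ ε := by
    intro ε hε
    set t : ℝ := min 1 (ε / (2 * C + 1))
    have ht : 0 < t := lt_min one_pos (by positivity)
    obtain ⟨x, hx, hxeq⟩ := hKcv.exists_eq_add_smul_sub hKc.isComplete hfK hf hx₀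
      (θ := 1 - t) (by linarith [min_le_left 1 (ε / (2 * C + 1))]) (by linarith)
    refine ⟨x, hx, ?_⟩
    have hfx : f x - x = t • (f x - x₀) := by
      nth_rewrite 2 [hxeq]; rw [sub_smul, one_smul]; abel
    calc ‖f x - x‖ = t * ‖f x - x₀‖ := by rw [hfx, norm_smul, Real.norm_of_nonneg ht.le]
      _ ≤ ε / (2 * C + 1) * (2 * C + 1) := by
        gcongr
        · exact min_le_right _ _
        · linarith [norm_sub_le (f x) x₀, hC _ (hfK hx), hC x₀ hx₀]
      _ = ε := by field_simp
  obtain ⟨x, hx, hmin⟩ := hKc.exists_isMinOn ⟨x₀, hx₀⟩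
    (f := fun x => ‖f x - x‖) ((hf.continuousOn.sub continuousOn_id).norm)
  refine ⟨x, hx, sub_eq_zero.mp (norm_le_zero_iff.mp (le_of_forall_pos_le_add fun ε hε => ?_))⟩
  obtain ⟨y, hy, hyε⟩ := happrox ε hε
  simpa using (hmin hy).trans hyε

end FixedPoint

theorem exists_radius_of_quadratic_le {c ℓ β r : ℝ} (hr : 0 < r) (hc : 0 ≤ c) (hβ : 0 ≤ β)
    (h : 1 / r * c + β * r + ℓ ≤ 1) :
    ∃ ρ, 0 ≤ ρ ∧ ρ ≤ r ∧ c + ℓ * ρ + β * ρ ^ 2 ≤ ρ ∧ ℓ + 2 * β * ρ ≤ 1 := by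
  have hcr : 0 ≤ 1 / r * c := by positivity
  have hr' : c + ℓ * r + β * r ^ 2 ≤ r := by
    have := mul_le_mul_of_nonneg_left h hr.le
    rw [mul_add, mul_add, ← mul_assoc, mul_one_div_cancel hr.ne', one_mul] at this
    nlinarith
  by_cases hlip : ℓ + 2 * β * r ≤ 1
  · exact ⟨r, hr.le, le_rfl, hr', hlip⟩
  -- otherwise take the vertex `ρ` of the parabola `c + ℓ ρ + β ρ² - ρ`, which lies in `[0, r)`
  have hβ' : 0 < β := lt_of_le_of_ne hβ (by rintro rfl; exact hlip (by linarith))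
  set ρ := (1 - ℓ) / (2 * β)
  have hvertex : 2 * β * ρ = 1 - ℓ := mul_div_cancel₀ _ (by positivity)
  have hρ : ρ ≤ r := by nlinarith
  refine ⟨ρ, div_nonneg (by nlinarith) (by positivity), hρ, ?_, by linarith⟩
  nlinarith [mul_nonneg hβ (sq_nonneg (r - ρ))]

section QuadraticMap

variable {E : Type*} [NormedAddCommGroup E] (b : E) (L : E →+ E) (Q : E →+ E →+ E) {ℓ β ρ : ℝ}

theorem norm_add_add_apply_le (hL : ∀ x, ‖L x‖ ≤ ℓ * ‖x‖) (hQ : ∀ x y, ‖Q x y‖ ≤ β * ‖x‖ * ‖y‖)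
    (hℓ : 0 ≤ ℓ) (hβ : 0 ≤ β) {w : E} (hw : ‖w‖ ≤ ρ) :
    ‖b + L w + Q w w‖ ≤ ‖b‖ + ℓ * ρ + β * ρ ^ 2 := by
  have hρ : 0 ≤ ρ := (norm_nonneg w).trans hw
  calc ‖b + L w + Q w w‖ ≤ ‖b‖ + ℓ * ‖w‖ + β * ‖w‖ * ‖w‖ :=
        (norm_add₃_le).trans (add_le_add_three le_rfl (hL w) (hQ w w))
    _ ≤ ‖b‖ + ℓ * ρ + β * ρ ^ 2 := by rw [mul_assoc, ← sq]; gcongr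

theorem norm_sub_add_add_apply_le (hL : ∀ x, ‖L x‖ ≤ ℓ * ‖x‖) (hQ : ∀ x y, ‖Q x y‖ ≤ β * ‖x‖ * ‖y‖)
    (hβ : 0 ≤ β) {w v : E} (hw : ‖w‖ ≤ ρ) (hv : ‖v‖ ≤ ρ) :
    ‖(b + L w + Q w w) - (b + L v + Q v v)‖ ≤ (ℓ + 2 * β * ρ) * ‖w - v‖ := by
  have hdiff : (b + L w + Q w w) - (b + L v + Q v v) = L (w - v) + Q (w - v) w + Q v (w - v) := by
    simp only [map_sub, AddMonoidHom.sub_apply]; abel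
  rw [hdiff]
  calc _ ≤ ℓ * ‖w - v‖ + β * ‖w - v‖ * ‖w‖ + β * ‖v‖ * ‖w - v‖ :=
        (norm_add₃_le).trans (add_le_add_three (hL _) (hQ _ _) (hQ _ _))
    _ ≤ ℓ * ‖w - v‖ + β * ‖w - v‖ * ρ + β * ρ * ‖w - v‖ := by gcongr
    _ = (ℓ + 2 * β * ρ) * ‖w - v‖ := by ring

theorem exists_fixedPoint_add_add_apply [NormedSpace ℝ E] [FiniteDimensional ℝ E]
    (hL : ∀ x, ‖L x‖ ≤ ℓ * ‖x‖) (hQ : ∀ x y, ‖Q x y‖ ≤ β * ‖x‖ * ‖y‖)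
    (hℓ : 0 ≤ ℓ) (hβ : 0 ≤ β) {r : ℝ} (hr : 0 < r) (h : 1 / r * ‖b‖ + β * r + ℓ ≤ 1) :
    ∃ w, ‖w‖ ≤ r ∧ b + L w + Q w w = w := by
  obtain ⟨ρ, hρ0, hρr, hself, hlip⟩ := exists_radius_of_quadratic_le hr (norm_nonneg b) hβ h
  obtain ⟨w, hw, hfix⟩ := (isCompact_closedBall (0 : E) ρ).exists_fixedPoint_of_lipschitzOnWith_one
    (convex_closedBall 0 ρ) (Metric.nonempty_closedBall.mpr hρ0)
    (f := fun w => b + L w + Q w w)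
    (fun w hw => by
      rw [mem_closedBall_zero_iff] at hw ⊢
      exact (norm_add_add_apply_le b L Q hL hQ hℓ hβ hw).trans hself)
    (LipschitzOnWith.of_dist_le_mul fun w hw v hv => by
      rw [mem_closedBall_zero_iff] at hw hv
      rw [dist_eq_norm, dist_eq_norm, NNReal.coe_one, one_mul]
      exact (norm_sub_add_add_apply_le b L Q hL hQ hβ hw hv).trans
        (mul_le_of_le_one_left (norm_nonneg _) hlip))
  exact ⟨w, (mem_closedBall_zero_iff.mp hw).trans hρr, hfix⟩

end QuadraticMap

theorem one_add_ne_zero_of_star_add_mul_eq_zero {R : Type*} [Ring R] [StarRing R] [Nontrivial R]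
    {z t : R} (h : star z + (1 + star z) * t = 0) : 1 + z ≠ 0 := by
  intro hz
  have hz' : 1 + star z = 0 := by simpa using congrArg star hz
  rw [hz', zero_mul, add_zero, star_eq_zero] at h
  simp [h] at hz

theorem norm_div_one_add_mem_Icc {𝕜 : Type*} [NormedDivisionRing 𝕜] (v : 𝕜) {z : 𝕜} {r : ℝ}
    (hz : ‖z‖ ≤ r) (hr : r < 1) :
    ‖v‖ / (1 + r) ≤ ‖v / (1 + z)‖ ∧ ‖v / (1 + z)‖ ≤ ‖v‖ / (1 - r) := by
  have hup : ‖1 + z‖ ≤ 1 + r := (norm_add_le _ _).trans (by rw [norm_one]; linarith)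
  have hlow : 1 - r ≤ ‖1 + z‖ := by
    have := norm_sub_norm_le (1 : 𝕜) (-z)
    rw [norm_one, norm_neg, sub_neg_eq_add] at this
    linarith
  rw [norm_div]
  exact ⟨div_le_div_of_nonneg_left (norm_nonneg v) (by linarith) hup,
    div_le_div_of_nonneg_left (norm_nonneg v) (by linarith) hlow⟩

theorem Matrix.diagonal_mulVec_eq_mul {m α : Type*} [Fintype m] [DecidableEq m]
    [NonUnitalNonAssocSemiring α] (d x : m → α) : diagonal d *ᵥ x = d * x :=
  funext (mulVec_diagonal d x)

theorem iSup_norm_eq_norm {ι E : Type*} [Fintype ι] [SeminormedAddCommGroup E] (x : ι → E) :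
    ⨆ i, ‖x i‖ = ‖x‖ :=
  le_antisymm (Real.iSup_le (norm_le_pi_norm x) (norm_nonneg x))
    ((pi_norm_le_iff_of_nonneg (Real.iSup_nonneg fun i => norm_nonneg (x i))).mpr
      (le_ciSup (Finite.bddAbove_range _)))

theorem Matrix.iSup_sum_norm_eq_linfty_opNorm {m n α : Type*} [Fintype m] [Fintype n]
    [SeminormedAddCommGroup α] (A : Matrix m n α) : ⨆ i, ∑ j, ‖A i j‖ = ‖A‖ := by
  simp_rw [← PiLp.norm_eq_of_L1 (WithLp.toLp 1 (A _))]
  exact iSup_norm_eq_norm (fun i => WithLp.toLp 1 (A i))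

theorem Matrix.norm_mulVec_add_mulVec_le {k l m n α : Type*} [Fintype k] [Fintype l] [Fintype m]
    [Fintype n] [NonUnitalSeminormedRing α] (A : Matrix l m α) (B : Matrix l n α)
    (C : Matrix k m α) (D : Matrix k n α) (x : m → α) (y : n → α) :
    ‖A *ᵥ x + B *ᵥ y‖ ≤ ‖fromBlocks A B C D‖ * max ‖x‖ ‖y‖ := by
  have hx : ‖Sum.elim x y‖ ≤ max ‖x‖ ‖y‖ := by
    refine (pi_norm_le_iff_of_nonneg (by positivity)).mpr fun i => ?_
    rcases i with i | i
    · exact (norm_le_pi_norm x i).trans (le_max_left _ _)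
    · exact (norm_le_pi_norm y i).trans (le_max_right _ _)
  calc ‖A *ᵥ x + B *ᵥ y‖ ≤ ‖fromBlocks A B C D *ᵥ Sum.elim x y‖ :=
        (pi_norm_le_iff_of_nonneg (norm_nonneg _)).mpr fun i => by
          simpa [fromBlocks_mulVec] using
            norm_le_pi_norm (fromBlocks A B C D *ᵥ Sum.elim x y) (Sum.inl i)
    _ ≤ ‖fromBlocks A B C D‖ * ‖Sum.elim x y‖ := linfty_opNorm_mulVec _ _
    _ ≤ ‖fromBlocks A B C D‖ * max ‖x‖ ‖y‖ := by gcongr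

section ConjLinear

variable {m : Type*} [Fintype m]

def mulVecStarAddMulVec (C D : Matrix m m ℂ) : (m → ℂ) →+ (m → ℂ) :=
  AddMonoidHom.mk' (fun x => C *ᵥ star x + D *ᵥ x) fun x y => by
    simp only [star_add, mulVec_add]; abel

theorem norm_mulVecStarAddMulVec_le (C D : Matrix m m ℂ) (x : m → ℂ) :
    ‖mulVecStarAddMulVec C D x‖ ≤ (‖C‖ + ‖D‖) * ‖x‖ := by
  have hC := linfty_opNorm_mulVec C (star x)
  have hD := linfty_opNorm_mulVec D x
  rw [norm_star] at hC
  exact (norm_add_le _ _).trans (by linarith)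

def mulVecMulStarAddMulVec (M N G : Matrix m m ℂ) : (m → ℂ) →+ (m → ℂ) →+ (m → ℂ) :=
  AddMonoidHom.mk'
    (fun p => AddMonoidHom.mk' (fun q => M *ᵥ (p * star (G *ᵥ q)) + N *ᵥ (star p * (G *ᵥ q)))
      fun q q' => by simp only [mulVec_add, star_add, mul_add]; abel)
    fun p p' => AddMonoidHom.ext fun q => by
      simp only [AddMonoidHom.mk'_apply, AddMonoidHom.add_apply, star_add, add_mul, mulVec_add]
      abel

theorem norm_mulVecMulStarAddMulVec_le (M N G C D : Matrix m m ℂ) (p q : m → ℂ) :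
    ‖mulVecMulStarAddMulVec M N G p q‖ ≤ ‖fromBlocks M N C D‖ * ‖G‖ * ‖p‖ * ‖q‖ := by
  have hGq : ‖G *ᵥ q‖ ≤ ‖G‖ * ‖q‖ := linfty_opNorm_mulVec G q
  have hmax : max ‖p * star (G *ᵥ q)‖ ‖star p * (G *ᵥ q)‖ ≤ ‖p‖ * (‖G‖ * ‖q‖) := by
    refine max_le ((norm_mul_le _ _).trans ?_) ((norm_mul_le _ _).trans ?_) <;>
      rw [norm_star] <;> gcongr
  calc _ ≤ ‖fromBlocks M N C D‖ * max ‖p * star (G *ᵥ q)‖ ‖star p * (G *ᵥ q)‖ :=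
        norm_mulVec_add_mulVec_le _ _ _ _ _ _
    _ ≤ ‖fromBlocks M N C D‖ * (‖p‖ * (‖G‖ * ‖q‖)) := by gcongr
    _ = ‖fromBlocks M N C D‖ * ‖G‖ * ‖p‖ * ‖q‖ := by ring

end ConjLinear

section PowerFlow

variable {n : ℕ}

theorem vnorm_eq_norm (x : Fin n → ℂ) : vnorm x = ‖x‖ := iSup_norm_eq_norm x

theorem mnorm_eq_norm (A : Matrix (Fin n) (Fin n) ℂ) : mnorm A = ‖A‖ :=
  A.iSup_sum_norm_eq_linfty_opNorm

theorem mnorm2_eq_norm (A : Matrix (Fin n ⊕ Fin n) (Fin n ⊕ Fin n) ℂ) : mnorm2 A = ‖A‖ :=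
  A.iSup_sum_norm_eq_linfty_opNorm

theorem star_mulVec_eq_mconj_mulVec (A : Matrix (Fin n) (Fin n) ℂ) (x : Fin n → ℂ) :
    star (A *ᵥ x) = mconj A *ᵥ star x := by
  ext i
  simp [mulVec, dotProduct, mconj]

theorem mconj_mul (A B : Matrix (Fin n) (Fin n) ℂ) : mconj (A * B) = mconj A * mconj B :=
  Matrix.map_mul

theorem mconj_diagonal (d : Fin n → ℂ) : mconj (diagonal d) = diagonal (star d) :=
  diagonal_map (map_zero _)

theorem isUnit_mconj {A : Matrix (Fin n) (Fin n) ℂ} (hA : IsUnit A) : IsUnit (mconj A) :=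
  hA.map (starRingEnd ℂ).mapMatrix

theorem mulVec_add_star_eq_of_inv_eq_fromBlocks {P M N : Matrix (Fin n) (Fin n) ℂ}
    {x w : Fin n → ℂ} (hJ : IsUnit (fromBlocks 1 (mconj P) P 1))
    (hinv : (fromBlocks 1 (mconj P) P 1)⁻¹ = fromBlocks M N (mconj N) (mconj M))
    (hw : M *ᵥ star x + N *ᵥ x = w) : P *ᵥ w + star w = x := by
  have hw' : mconj N *ᵥ star x + mconj M *ᵥ x = star w := by
    rw [← hw, star_add, star_mulVec_eq_mconj_mulVec, star_mulVec_eq_mconj_mulVec, star_star,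
      add_comm]
  have hsolve : (fromBlocks 1 (mconj P) P 1)⁻¹ *ᵥ Sum.elim (star x) x = Sum.elim w (star w) := by
    rw [hinv, fromBlocks_mulVec, Sum.elim_comp_inl, Sum.elim_comp_inr, hw, hw']
  have hJw : fromBlocks 1 (mconj P) P 1 *ᵥ Sum.elim w (star w) = Sum.elim (star x) x := by
    rw [← hsolve, mulVec_mulVec, mul_nonsing_inv _ ((isUnit_iff_isUnit_det _).mp hJ), one_mulVec]
  funext i
  simpa [fromBlocks_mulVec] using congrFun hJw (Sum.inr i)

/-- With `V = V_* / (1 + w)`, the power flow equations read `Z_* diag(s_*) w + conj w = R(w)`,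
where `R = powerFlowResidual Z_* Δs s`. -/
def powerFlowResidual (Z : Matrix (Fin n) (Fin n) ℂ) (Δs s w : Fin n → ℂ) : Fin n → ℂ :=
  -(Z *ᵥ (Δs + Δs * w)) - star w * (Z *ᵥ (Δs + s * w))

theorem mulVec_star_powerFlowResidual_add_mulVec (M N Z : Matrix (Fin n) (Fin n) ℂ)
    (Δs s w : Fin n → ℂ) :
    M *ᵥ star (powerFlowResidual Z Δs s w) + N *ᵥ powerFlowResidual Z Δs s w =
      -((M * mconj Z) *ᵥ star Δs + (N * Z) *ᵥ Δs)
      - mulVecStarAddMulVec (M * mconj Z * diagonal (star Δs) + N * diagonal (Z *ᵥ Δs))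
          (M * diagonal (star (Z *ᵥ Δs)) + N * Z * diagonal Δs) w
      - mulVecMulStarAddMulVec M N (Z * diagonal s) w w := by
  simp only [powerFlowResidual, mulVecStarAddMulVec, mulVecMulStarAddMulVec,
    AddMonoidHom.mk'_apply, star_sub, star_neg, star_mul', star_star, star_add,
    star_mulVec_eq_mconj_mulVec, ← mulVec_mulVec, diagonal_mulVec_eq_mul, mulVec_sub, mulVec_add,
    mulVec_neg, add_mulVec, mul_add]
  rw [mul_comm (Z *ᵥ Δs), mul_comm (mconj Z *ᵥ star Δs)]
  abel

theorem exists_fixedPoint_powerFlowResidual {M N Z : Matrix (Fin n) (Fin n) ℂ} {s Δs : Fin n → ℂ}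
    {r : ℝ} (hr : 0 < r)
    (hcond : (1 / r) * vnorm ((M * mconj Z) *ᵥ star Δs + (N * Z) *ᵥ Δs)
      + mnorm2 (fromBlocks M N (mconj N) (mconj M)) * mnorm (Z * diagonal s) * r
      + mnorm (M * mconj Z * diagonal (star Δs) + N * diagonal (Z *ᵥ Δs))
      + mnorm (M * diagonal (star (Z *ᵥ Δs)) + N * Z * diagonal Δs) ≤ 1) :
    ∃ w : Fin n → ℂ, ‖w‖ ≤ r ∧
      M *ᵥ star (powerFlowResidual Z Δs s w) + N *ᵥ powerFlowResidual Z Δs s w = w := by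
  rw [vnorm_eq_norm, mnorm2_eq_norm, mnorm_eq_norm, mnorm_eq_norm, mnorm_eq_norm, ← norm_neg]
    at hcond
  obtain ⟨w, hw, hfix⟩ := exists_fixedPoint_add_add_apply _
    (-mulVecStarAddMulVec (M * mconj Z * diagonal (star Δs) + N * diagonal (Z *ᵥ Δs))
      (M * diagonal (star (Z *ᵥ Δs)) + N * Z * diagonal Δs))
    (-mulVecMulStarAddMulVec M N (Z * diagonal s))
    (fun x => by simpa using norm_mulVecStarAddMulVec_le _ _ x)
    (fun p q => by simpa using norm_mulVecMulStarAddMulVec_le _ _ _ (mconj N) (mconj M) p q)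
    (by positivity) (by positivity) hr (by rwa [← add_assoc])
  refine ⟨w, hw, ?_⟩
  rw [mulVec_star_powerFlowResidual_add_mulVec]
  simpa [sub_eq_add_neg] using hfix

theorem star_add_mul_eq_zero_of_mulVec_add_star_eq_powerFlowResidual {Z : Matrix (Fin n) (Fin n) ℂ}
    {ss s Δs w : Fin n → ℂ} (hΔs : Δs = s - ss)
    (h : (Z * diagonal ss) *ᵥ w + star w = powerFlowResidual Z Δs s w) :
    star w + (1 + star w) * (Z *ᵥ (Δs + s * w)) = 0 := by
  have hsplit : Z *ᵥ (Δs + s * w) = Z *ᵥ (Δs + Δs * w) + (Z * diagonal ss) *ᵥ w := by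
    rw [← mulVec_mulVec, diagonal_mulVec_eq_mul, ← mulVec_add, hΔs]
    ring_nf
  rw [powerFlowResidual, hsplit] at h
  rw [hsplit]
  linear_combination h

theorem diagonal_mulVec_star_mulVec_div_one_add {Y Z : Matrix (Fin n) (Fin n) ℂ}
    {V0 Vs ss s Δs w : Fin n → ℂ}
    (hbase : diagonal Vs *ᵥ star (Y *ᵥ (Vs - V0)) = ss)
    (hKZ : diagonal Vs * mconj Y * diagonal (star Vs) * Z = 1) (hΔs : Δs = s - ss)
    (hw : star w + (1 + star w) * (Z *ᵥ (Δs + s * w)) = 0) :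
    diagonal (Vs / (1 + w)) *ᵥ star (Y *ᵥ (Vs / (1 + w) - V0)) = s := by
  set t := Z *ᵥ (Δs + s * w)
  set V := Vs / (1 + w)
  have hne i : 1 + w i ≠ 0 := one_add_ne_zero_of_star_add_mul_eq_zero (congrFun hw i)
  have hstar : star (Vs - V) = -(star Vs * t) := by
    funext i
    have hwi := congrFun hw i
    have hne' : 1 + star (w i) ≠ 0 := by simpa using star_ne_zero.mpr (hne i)
    simp only [Pi.add_apply, Pi.mul_apply, Pi.star_apply, Pi.one_apply, Pi.zero_apply] at hwi
    simp only [V, Pi.star_apply, Pi.sub_apply, Pi.div_apply, Pi.add_apply, Pi.one_apply,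
      Pi.neg_apply, Pi.mul_apply, star_sub, star_div₀, star_add, star_one]
    field_simp
    linear_combination (star (Vs i)) * hwi
  have hKt : Vs * (mconj Y *ᵥ (star Vs * t)) = Δs + s * w := by
    rw [← diagonal_mulVec_eq_mul, ← diagonal_mulVec_eq_mul, mulVec_mulVec, mulVec_mulVec,
      mulVec_mulVec, hKZ, one_mulVec]
  have hdrop : Vs * star (Y *ᵥ (Vs - V)) = -(Δs + s * w) := by
    rw [star_mulVec_eq_mconj_mulVec, hstar, mulVec_neg, mul_neg, hKt]
  have hsplit : V - V0 = (Vs - V0) - (Vs - V) := by abel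
  funext i
  have hb := congrFun hbase i
  have hd := congrFun hdrop i
  have hs := congrFun hΔs i
  rw [hsplit, mulVec_sub, star_sub]
  simp only [mulVec_diagonal, Pi.mul_apply, Pi.neg_apply, Pi.add_apply, Pi.star_apply,
    Pi.sub_apply] at hb hd hs ⊢
  simp only [V, Pi.div_apply, Pi.add_apply, Pi.one_apply]
  field_simp [hne i]
  linear_combination hb - hd + hs

end PowerFlow

theorem solvability_certificate_general {n : ℕ}
    (Y : Matrix (Fin n) (Fin n) ℂ) (hY : IsUnit Y)
    (V0 Vs ss : Fin n → ℂ)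
    (hVs : ∀ i, Vs i ≠ 0)
    (hbase : Matrix.diagonal Vs *ᵥ star (Y *ᵥ (Vs - V0)) = ss)
    (Z : Matrix (Fin n) (Fin n) ℂ)
    (hZ : Z = (Matrix.diagonal (star Vs))⁻¹ * (mconj Y)⁻¹ * (Matrix.diagonal Vs)⁻¹)
    (J : Matrix (Fin n ⊕ Fin n) (Fin n ⊕ Fin n) ℂ)
    (hJ : J = Matrix.fromBlocks 1 (mconj Z * Matrix.diagonal (star ss))
                (Z * Matrix.diagonal ss) 1)
    (hJu : IsUnit J)
    (M N : Matrix (Fin n) (Fin n) ℂ)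
    (hMN : J⁻¹ = Matrix.fromBlocks M N (mconj N) (mconj M))
    (s : Fin n → ℂ) (r : ℝ) (hr : 0 < r)
    (Δs : Fin n → ℂ) (hΔs : Δs = s - ss)
    (hcond :
      (1 / r) * vnorm ((M * mconj Z) *ᵥ star Δs + (N * Z) *ᵥ Δs)
      + mnorm2 J⁻¹ * mnorm (Z * Matrix.diagonal s) * r
      + mnorm (M * mconj Z * Matrix.diagonal (star Δs) + N * Matrix.diagonal (Z *ᵥ Δs))
      + mnorm (M * Matrix.diagonal (star (Z *ᵥ Δs)) + N * Z * Matrix.diagonal Δs) ≤ 1) :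
    ∃ V : Fin n → ℂ, (∀ i, V i ≠ 0) ∧
      Matrix.diagonal V *ᵥ star (Y *ᵥ (V - V0)) = s ∧
      (r < 1 → ∀ i, ‖Vs i‖ / (1 + r) ≤ ‖V i‖ ∧
        ‖V i‖ ≤ ‖Vs i‖ / (1 - r)) := by
  rw [hMN] at hcond
  obtain ⟨w, hwr, hfix⟩ := exists_fixedPoint_powerFlowResidual hr hcond
  rw [← mconj_diagonal, ← mconj_mul] at hJ
  subst hJ
  have hred := star_add_mul_eq_zero_of_mulVec_add_star_eq_powerFlowResidual hΔs
    (mulVec_add_star_eq_of_inv_eq_fromBlocks hJu hMN hfix)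
  have hKZ : diagonal Vs * mconj Y * diagonal (star Vs) * Z = 1 := by
    have hK : IsUnit (diagonal Vs * mconj Y * diagonal (star Vs)) :=
      ((isUnit_diagonal.mpr (Pi.isUnit_iff.mpr fun i => (hVs i).isUnit)).mul (isUnit_mconj hY)).mul
        (isUnit_diagonal.mpr (Pi.isUnit_iff.mpr fun i => (star_ne_zero.mpr (hVs i)).isUnit))
    rw [hZ, ← Matrix.mul_inv_rev, ← Matrix.mul_inv_rev, ← Matrix.mul_assoc]
    exact mul_nonsing_inv _ ((isUnit_iff_isUnit_det _).mp hK)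
  refine ⟨Vs / (1 + w), fun i => div_ne_zero (hVs i) ?_,
    diagonal_mulVec_star_mulVec_div_one_add hbase hKZ hΔs hred, fun hr1 i => ?_⟩
  · exact one_add_ne_zero_of_star_add_mul_eq_zero (congrFun hred i)
  · exact norm_div_one_add_mem_Icc (Vs i) ((norm_le_pi_norm w i).trans hwr) hr1

theorem solvability_certificate {n : ℕ} (hn : 1 ≤ n)
    (Y : Matrix (Fin n) (Fin n) ℂ) (hY : IsUnit Y)
    (V0 Vs ss : Fin n → ℂ)
    (hVs : ∀ i, Vs i ≠ 0)
    (hbase : Matrix.diagonal Vs *ᵥ star (Y *ᵥ (Vs - V0)) = ss)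
    (Z : Matrix (Fin n) (Fin n) ℂ)
    (hZ : Z = (Matrix.diagonal (star Vs))⁻¹ * (mconj Y)⁻¹ * (Matrix.diagonal Vs)⁻¹)
    (J : Matrix (Fin n ⊕ Fin n) (Fin n ⊕ Fin n) ℂ)
    (hJ : J = Matrix.fromBlocks 1 (mconj Z * Matrix.diagonal (star ss))
                (Z * Matrix.diagonal ss) 1)
    (hJu : IsUnit J)
    (M N : Matrix (Fin n) (Fin n) ℂ)
    (hMN : J⁻¹ = Matrix.fromBlocks M N (mconj N) (mconj M))
    (s : Fin n → ℂ) (r : ℝ) (hr : 0 < r)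
    (Δs : Fin n → ℂ) (hΔs : Δs = s - ss)
    (hcond :
      (1 / r) * vnorm ((M * mconj Z) *ᵥ star Δs + (N * Z) *ᵥ Δs)
      + mnorm2 J⁻¹ * mnorm (Z * Matrix.diagonal s) * r
      + mnorm (M * mconj Z * Matrix.diagonal (star Δs) + N * Matrix.diagonal (Z *ᵥ Δs))
      + mnorm (M * Matrix.diagonal (star (Z *ᵥ Δs)) + N * Z * Matrix.diagonal Δs) ≤ 1) :
    ∃ V : Fin n → ℂ, (∀ i, V i ≠ 0) ∧
      Matrix.diagonal V *ᵥ star (Y *ᵥ (V - V0)) = s ∧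
      (r < 1 → ∀ i, ‖Vs i‖ / (1 + r) ≤ ‖V i‖ ∧
        ‖V i‖ ≤ ‖Vs i‖ / (1 - r)) :=
  solvability_certificate_general Y hY V0 Vs ss hVs hbase Z hZ J hJ hJu M N hMN s r hr Δs hΔs hcond
end

section
/- Let n ≥ 1, let Y ∈ ℂ^{n×n} be invertible, let V⁰ ∈ ℂⁿ, and let (V_*, s_*) be a base solution of diag(V_*)·conj(Y(V_* − V⁰)) = s_* with all entries of V_* nonzero. Let V ∈ ℂⁿ have all entries nonzero, let s ∈ ℂⁿ, set Δs = s − s_* and y = V_*/V − 1 (componentwise division). Then V satisfies diag(V)·conj(Y(V − V⁰)) = s if and only if y + ζ(s_*)·conj(y) = −η(Δs) − diag(η(Δs))·y − ζ(Δs)·conj(y) − diag(y)·ζ(s)·conj(y). -/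
/-!
Dividing the power flow equation for `V` by `V`, subtracting the base equation divided by `V_*`
and writing `y = V_*/V - 1` turns it into `V_* · conj (Y (V - V_*)) = Δs + s·y`. Since `Z_*` is
the inverse of `diag(V_*) · conj Y · diag(conj V_*)`, this says `conj (Z_* (Δs + s·y)) = V/V_* - 1
= -y/(1 + y)`, i.e. `y + (1 + y) · conj (Z_* (Δs + s·y)) = 0`; expanding `s = s_* + Δs` by
linearity of `Z_*` gives the stated quadratic equation in `y`.
-/

open Matrix

namespace Matrix

variable {ι R : Type*} [Fintype ι] [DecidableEq ι]

theorem diagonal_mulVec_eq_mul_s3 [NonUnitalNonAssocSemiring R] (v w : ι → R) :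
    diagonal v *ᵥ w = v * w :=
  funext (mulVec_diagonal v w)

theorem inv_mulVec_eq_iff [CommRing R] {A : Matrix ι ι R} (hA : IsUnit A) {u v : ι → R} :
    A⁻¹ *ᵥ u = v ↔ u = A *ᵥ v := by
  have hdet := (isUnit_iff_isUnit_det A).mp hA
  constructor
  · rintro rfl
    rw [mulVec_mulVec, mul_nonsing_inv A hdet, one_mulVec]
  · rintro rfl
    rw [mulVec_mulVec, nonsing_inv_mul A hdet, one_mulVec]

end Matrix

theorem div_sub_one_add_mul_eq_zero_iff {ι K : Type*} [Field K] {V Vs : ι → K}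
    (hV : ∀ i, V i ≠ 0) (hVs : ∀ i, Vs i ≠ 0) (p : ι → K) :
    (Vs / V - 1) + (1 + (Vs / V - 1)) * p = 0 ↔ p = V / Vs - 1 := by
  rw [funext_iff, funext_iff]
  refine forall_congr' fun i => ?_
  simp only [Pi.mul_apply, Pi.sub_apply, Pi.add_apply, Pi.div_apply, Pi.one_apply, Pi.zero_apply]
  field_simp [hV i, hVs i]
  constructor <;> intro h <;> linear_combination h

section StarField

variable {ι K : Type*} [Fintype ι] [Field K] [StarRing K]

theorem quadratic_deviation_eq_iff (Z : Matrix ι ι K) (ss s y : ι → K) :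
    y + star (Z *ᵥ (ss * y)) =
        -star (Z *ᵥ (s - ss)) - star (Z *ᵥ (s - ss)) * y - star (Z *ᵥ ((s - ss) * y))
          - y * star (Z *ᵥ (s * y)) ↔
      y + (1 + y) * star (Z *ᵥ ((s - ss) + s * y)) = 0 := by
  simp only [sub_mul, mulVec_add, mulVec_sub, star_add, star_sub]
  constructor <;> intro h <;> linear_combination h

variable [DecidableEq ι]

theorem power_flow_iff_deviation {Y : Matrix ι ι K} {V0 Vs ss : ι → K} (hVs : ∀ i, Vs i ≠ 0)
    (hbase : diagonal Vs *ᵥ star (Y *ᵥ (Vs - V0)) = ss) {V : ι → K} (hV : ∀ i, V i ≠ 0)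
    (s : ι → K) :
    diagonal V *ᵥ star (Y *ᵥ (V - V0)) = s ↔
      Vs * star (Y *ᵥ (V - Vs)) = (s - ss) + s * (Vs / V - 1) := by
  have hdiff : Y *ᵥ (V - Vs) = Y *ᵥ (V - V0) - Y *ᵥ (Vs - V0) := by
    rw [← mulVec_sub, sub_sub_sub_cancel_right]
  rw [← hbase, hdiff, star_sub, diagonal_mulVec_eq_mul_s3, diagonal_mulVec_eq_mul_s3, funext_iff,
    funext_iff]
  refine forall_congr' fun i => ?_
  simp only [Pi.mul_apply, Pi.sub_apply, Pi.add_apply, Pi.div_apply, Pi.one_apply]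
  rw [← mul_right_inj' (hVs i)]
  constructor <;> intro h
  · field_simp [hV i]
    linear_combination h
  · field_simp [hV i] at h
    linear_combination h

end StarField

section Complex

variable {n : ℕ}

theorem mconj_mulVec_star (A : Matrix (Fin n) (Fin n) ℂ) (v : Fin n → ℂ) :
    mconj A *ᵥ star v = star (A *ᵥ v) :=
  funext fun i => ((starRingEnd ℂ).map_mulVec A v i).symm

theorem mconj_mul_diagonal_star_mulVec_star (A : Matrix (Fin n) (Fin n) ℂ) (w v : Fin n → ℂ) :
    (mconj A * diagonal (star w)) *ᵥ star v = star (A *ᵥ (w * v)) := by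
  rw [← mulVec_mulVec, diagonal_mulVec_eq_mul_s3, ← star_mul', mconj_mulVec_star]

theorem star_mulVec_eq_div_sub_one_iff {Y : Matrix (Fin n) (Fin n) ℂ} (hY : IsUnit Y)
    {Vs : Fin n → ℂ} (hVs : ∀ i, Vs i ≠ 0) (V q : Fin n → ℂ) :
    star (((diagonal (star Vs))⁻¹ * (mconj Y)⁻¹ * (diagonal Vs)⁻¹) *ᵥ q) = V / Vs - 1 ↔
      q = Vs * star (Y *ᵥ (V - Vs)) := by
  have hD : IsUnit (diagonal Vs) :=
    isUnit_diagonal.mpr (Pi.isUnit_iff.mpr fun i => (hVs i).isUnit)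
  have hD' : IsUnit (diagonal (star Vs)) :=
    isUnit_diagonal.mpr (Pi.isUnit_iff.mpr fun i => (star_ne_zero.mpr (hVs i)).isUnit)
  have hB : IsUnit (mconj Y) := hY.map (starRingEnd ℂ).mapMatrix
  have hscale : diagonal (star Vs) *ᵥ star (V / Vs - 1) = star (V - Vs) := by
    rw [diagonal_mulVec_eq_mul_s3, ← star_mul']
    congr 1
    funext i
    simp only [Pi.mul_apply, Pi.sub_apply, Pi.div_apply, Pi.one_apply]
    field_simp [hVs i]
  rw [star_eq_iff_star_eq, eq_comm, ← Matrix.mul_inv_rev, ← Matrix.mul_inv_rev,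
    inv_mulVec_eq_iff (hD.mul (hB.mul hD')), ← mulVec_mulVec, ← mulVec_mulVec, hscale,
    mconj_mulVec_star, diagonal_mulVec_eq_mul_s3]

end Complex

theorem power_flow_rewrite_general {n : ℕ}
    (Y : Matrix (Fin n) (Fin n) ℂ) (hY : IsUnit Y)
    (V0 Vs ss : Fin n → ℂ)
    (hVs : ∀ i, Vs i ≠ 0)
    (hbase : Matrix.diagonal Vs *ᵥ star (Y *ᵥ (Vs - V0)) = ss)
    (Z : Matrix (Fin n) (Fin n) ℂ)
    (hZ : Z = (Matrix.diagonal (star Vs))⁻¹ * (mconj Y)⁻¹ * (Matrix.diagonal Vs)⁻¹)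
    (ζ : (Fin n → ℂ) → Matrix (Fin n) (Fin n) ℂ)
    (hζ : ∀ w, ζ w = mconj Z * Matrix.diagonal (star w))
    (η : (Fin n → ℂ) → (Fin n → ℂ))
    (hη : ∀ w, η w = star (Z *ᵥ w))
    (V : Fin n → ℂ) (hV : ∀ i, V i ≠ 0)
    (s : Fin n → ℂ)
    (Δs : Fin n → ℂ) (hΔs : Δs = s - ss)
    (y : Fin n → ℂ) (hy : y = fun i => Vs i / V i - 1) :
    Matrix.diagonal V *ᵥ star (Y *ᵥ (V - V0)) = s ↔
      y + ζ ss *ᵥ star y =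
        -η Δs - Matrix.diagonal (η Δs) *ᵥ y - ζ Δs *ᵥ star y
          - (Matrix.diagonal y * ζ s) *ᵥ star y := by
  replace hy : y = Vs / V - 1 := hy
  subst hΔs hy
  have hζ_mulVec_star : ∀ w v, ζ w *ᵥ star v = star (Z *ᵥ (w * v)) := fun w v => by
    rw [hζ, mconj_mul_diagonal_star_mulVec_star]
  rw [power_flow_iff_deviation hVs hbase hV, ← mulVec_mulVec, hζ_mulVec_star, hζ_mulVec_star,
    hζ_mulVec_star, hη, diagonal_mulVec_eq_mul_s3, diagonal_mulVec_eq_mul_s3,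
    quadratic_deviation_eq_iff, div_sub_one_add_mul_eq_zero_iff hV hVs, hZ,
    star_mulVec_eq_div_sub_one_iff hY hVs]
  exact eq_comm

theorem power_flow_rewrite {n : ℕ} (hn : 1 ≤ n)
    (Y : Matrix (Fin n) (Fin n) ℂ) (hY : IsUnit Y)
    (V0 Vs ss : Fin n → ℂ)
    (hVs : ∀ i, Vs i ≠ 0)
    (hbase : Matrix.diagonal Vs *ᵥ star (Y *ᵥ (Vs - V0)) = ss)
    (Z : Matrix (Fin n) (Fin n) ℂ)
    (hZ : Z = (Matrix.diagonal (star Vs))⁻¹ * (mconj Y)⁻¹ * (Matrix.diagonal Vs)⁻¹)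
    (ζ : (Fin n → ℂ) → Matrix (Fin n) (Fin n) ℂ)
    (hζ : ∀ w, ζ w = mconj Z * Matrix.diagonal (star w))
    (η : (Fin n → ℂ) → (Fin n → ℂ))
    (hη : ∀ w, η w = star (Z *ᵥ w))
    (V : Fin n → ℂ) (hV : ∀ i, V i ≠ 0)
    (s : Fin n → ℂ)
    (Δs : Fin n → ℂ) (hΔs : Δs = s - ss)
    (y : Fin n → ℂ) (hy : y = fun i => Vs i / V i - 1) :
    Matrix.diagonal V *ᵥ star (Y *ᵥ (V - V0)) = s ↔
      y + ζ ss *ᵥ star y =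
        -η Δs - Matrix.diagonal (η Δs) *ᵥ y - ζ Δs *ᵥ star y
          - (Matrix.diagonal y * ζ s) *ᵥ star y :=
  power_flow_rewrite_general Y hY V0 Vs ss hVs hbase Z hZ ζ hζ η hη V hV s Δs hΔs y hy
end

section
/- For all real numbers R, X, P, Q: there exists a real number v such that v² = v⁴ + 2·(R·P + X·Q)·v² + (R² + X²)·(P² + Q²) if and only if (R·Q − X·P)² + R·P + X·Q ≤ 1/4. -/
theorem biquadratic_real_solution_iff (R X P Q : ℝ) :
    (∃ v : ℝ, v ^ 2 = v ^ 4 + 2 * (R * P + X * Q) * v ^ 2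
        + (R ^ 2 + X ^ 2) * (P ^ 2 + Q ^ 2)) ↔
      (R * Q - X * P) ^ 2 + R * P + X * Q ≤ 1 / 4 := by
  constructor
  · rintro ⟨v, hv⟩
    nlinarith [sq_nonneg (2 * v ^ 2 - (1 - 2 * (R * P + X * Q))), sq_nonneg v]
  · intro h
    have hD : (0:ℝ) ≤ 1 - 4 * (R * P + X * Q) - 4 * (R * Q - X * P) ^ 2 := by
      linarith
    set d := Real.sqrt (1 - 4 * (R * P + X * Q) - 4 * (R * Q - X * P) ^ 2) with hd
    have hd2 : d ^ 2 = 1 - 4 * (R * P + X * Q) - 4 * (R * Q - X * P) ^ 2 :=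
      Real.sq_sqrt hD
    have hdnn : 0 ≤ d := Real.sqrt_nonneg _
    have hu : (0:ℝ) ≤ (1 - 2 * (R * P + X * Q) + d) / 2 := by
      nlinarith [sq_nonneg (R * Q - X * P)]
    refine ⟨Real.sqrt ((1 - 2 * (R * P + X * Q) + d) / 2), ?_⟩
    have hv2 : Real.sqrt ((1 - 2 * (R * P + X * Q) + d) / 2) ^ 2
        = (1 - 2 * (R * P + X * Q) + d) / 2 := Real.sq_sqrt hu
    have hv4 : Real.sqrt ((1 - 2 * (R * P + X * Q) + d) / 2) ^ 4
        = ((1 - 2 * (R * P + X * Q) + d) / 2) ^ 2 := by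
      rw [show (4:ℕ) = 2 * 2 from rfl, pow_mul, hv2]
    rw [hv2, hv4]
    nlinarith [hd2]
end

section
/- Let R, X be real numbers with R + jX ≠ 0 and let P, Q be real numbers. If √((R² + X²)·(P² + Q²)) ≤ 1/4, then there exists V ∈ ℂ, V ≠ 0, such that V · conj((V − 1)/(R + jX)) = P + jQ. -/
theorem two_bus_solvability (R X P Q : ℝ)
    (hZ : (R : ℂ) + Complex.I * X ≠ 0)
    (h : Real.sqrt ((R ^ 2 + X ^ 2) * (P ^ 2 + Q ^ 2)) ≤ 1 / 4) :
    ∃ V : ℂ, V ≠ 0 ∧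
      V * (starRingEnd ℂ) ((V - 1) / ((R : ℂ) + Complex.I * X)) =
        (P : ℂ) + Complex.I * Q := by
  set Z : ℂ := (R : ℂ) + Complex.I * X with hZdef
  set s : ℂ := (P : ℂ) + Complex.I * Q with hsdef
  set c : ℂ := s * (starRingEnd ℂ) Z with hcdef
  set a : ℝ := c.re with hadef
  set b : ℝ := c.im with hbdef
  have hprod_nonneg : (0:ℝ) ≤ (R ^ 2 + X ^ 2) * (P ^ 2 + Q ^ 2) := by positivity
  have hsq : (R ^ 2 + X ^ 2) * (P ^ 2 + Q ^ 2) ≤ 1 / 16 := by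
    have h1 := Real.sq_sqrt hprod_nonneg
    nlinarith [Real.sqrt_nonneg ((R ^ 2 + X ^ 2) * (P ^ 2 + Q ^ 2))]
  have hns : Complex.normSq c = (R ^ 2 + X ^ 2) * (P ^ 2 + Q ^ 2) := by
    rw [hcdef, Complex.normSq_mul, Complex.normSq_conj]
    simp [hsdef, hZdef, Complex.normSq_apply]
    ring
  have hab : a ^ 2 + b ^ 2 ≤ 1 / 16 := by
    have h2 : a ^ 2 + b ^ 2 = Complex.normSq c := by
      rw [Complex.normSq_apply]; ring
    rw [h2, hns]; exact hsq
  have hdisc : (0:ℝ) ≤ 1 + 4 * a - 4 * b ^ 2 := by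
    nlinarith [sq_nonneg (a + 1/4), sq_nonneg b]
  set d : ℝ := Real.sqrt (1 + 4 * a - 4 * b ^ 2) with hddef
  have hd_nonneg : 0 ≤ d := Real.sqrt_nonneg _
  have hd_sq : d ^ 2 = 1 + 4 * a - 4 * b ^ 2 := Real.sq_sqrt hdisc
  set t : ℝ := (2 * a + 1 + d) / 2 with htdef
  have ht : t ^ 2 = (2 * a + 1) * t - (a ^ 2 + b ^ 2) := by
    rw [htdef]; nlinarith [hd_sq]
  -- helper complex identities
  have hsum : c + (starRingEnd ℂ) c = ((2 * a : ℝ) : ℂ) := by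
    rw [Complex.add_conj]
  have hcc : c * (starRingEnd ℂ) c = ((a ^ 2 + b ^ 2 : ℝ) : ℂ) := by
    rw [Complex.mul_conj, Complex.normSq_apply]; push_cast; ring
  have htC : ((t : ℂ)) ^ 2 = (2 * (a:ℂ) + 1) * (t:ℂ) - ((a:ℂ) ^ 2 + (b:ℂ) ^ 2) := by
    exact_mod_cast congrArg (fun x : ℝ => (x : ℂ)) ht
  have key : ((t : ℂ) - c) * (starRingEnd ℂ) ((t : ℂ) - c - 1) = c := by
    have hconj : (starRingEnd ℂ) ((t : ℂ) - c - 1) = (t : ℂ) - (starRingEnd ℂ) c - 1 := by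
      simp
    rw [hconj]
    have hsum' : c + (starRingEnd ℂ) c = 2 * (a:ℂ) := by rw [hsum]; push_cast; ring
    have hcc' : c * (starRingEnd ℂ) c = (a:ℂ) ^ 2 + (b:ℂ) ^ 2 := by
      rw [hcc]; push_cast; ring
    linear_combination htC - (t : ℂ) * hsum' + hcc'
  refine ⟨(t : ℂ) - c, ?_, ?_⟩
  · -- nonzero
    intro hV0
    have hc_eq : c = (t : ℂ) := by
      have := sub_eq_zero.mp hV0
      exact this.symm
    have ha_t : a = t := by rw [hadef, hc_eq]; simp
    have hb_0 : b = 0 := by rw [hbdef, hc_eq]; simp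
    have : d = -1 := by rw [htdef] at ha_t; linarith
    linarith
  · -- equation
    have hZc : (starRingEnd ℂ) Z ≠ 0 := by
      simpa using star_ne_zero.mpr hZ
    rw [show ((t : ℂ) - c - 1) / Z = ((t : ℂ) - c - 1) * Z⁻¹ by ring] at *
    rw [map_mul, map_inv₀, ← mul_assoc, key]
    rw [hcdef]
    field_simp
end
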